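/- Given f : ℕ → ℝ, g(x) = sup { ∑_{n ∈ M} 2^{-n} : M ⊆ ℕ finite, ∀ n ∈ M, f(n) < x }, A = { x : x ≤ g(x) }, x₀ = sup A, and n₀ ∈ ℕ with f(n₀) = x₀: for every x ∈ A, x ≤ x₀ - 2^{-n₀}. That is, x₀ - 2^{-n₀} is an upper bound of A. -/
import Mathlib


noncomputable def g (f : ℕ → ℝ) (x : ℝ) : ℝ :=
  sSup {s : ℝ | ∃ M : Finset ℕ, (∀ n ∈ M, f n < x) ∧ s = ∑ n ∈ M, (2:ℝ) ^ (-(n:ℤ))}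

lemma sum_le_two (M : Finset ℕ) : ∑ n ∈ M, (2:ℝ) ^ (-(n:ℤ)) ≤ 2 := by
  have hrw : ∀ n : ℕ, (2:ℝ) ^ (-(n:ℤ)) = (1/2:ℝ) ^ n := by
    intro n
    rw [zpow_neg, zpow_natCast, one_div, inv_pow]
  calc ∑ n ∈ M, (2:ℝ) ^ (-(n:ℤ)) = ∑ n ∈ M, (1/2:ℝ) ^ n := by
        exact Finset.sum_congr rfl fun n _ => hrw n
    _ ≤ ∑' n : ℕ, (1/2:ℝ) ^ n := by
        refine Summable.sum_le_tsum M (fun i _ => by positivity) ?_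
        exact summable_geometric_of_lt_one (by norm_num) (by norm_num)
    _ = 2 := by
        rw [tsum_geometric_of_lt_one (by norm_num) (by norm_num)]; norm_num

lemma gS_nonempty (f : ℕ → ℝ) (x : ℝ) :
    (0:ℝ) ∈ {s : ℝ | ∃ M : Finset ℕ, (∀ n ∈ M, f n < x) ∧ s = ∑ n ∈ M, (2:ℝ) ^ (-(n:ℤ))} :=
  ⟨∅, fun n hn => absurd hn (Finset.notMem_empty n), by simp⟩

lemma gS_bdd (f : ℕ → ℝ) (x : ℝ) :
    ∀ s ∈ {s : ℝ | ∃ M : Finset ℕ, (∀ n ∈ M, f n < x) ∧ s = ∑ n ∈ M, (2:ℝ) ^ (-(n:ℤ))}, s ≤ 2 := by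
  rintro s ⟨M, _, rfl⟩; exact sum_le_two M

lemma g_le_two (f : ℕ → ℝ) (x : ℝ) : g f x ≤ 2 :=
  csSup_le ⟨0, gS_nonempty f x⟩ (gS_bdd f x)

lemma A_bdd (f : ℕ → ℝ) : BddAbove {x : ℝ | x ≤ g f x} :=
  ⟨2, fun x hx => le_trans hx (g_le_two f x)⟩

theorem stmt7 (f : ℕ → ℝ) (n₀ : ℕ) (h : f n₀ = sSup {x : ℝ | x ≤ g f x}) :
    ∀ x ∈ {x : ℝ | x ≤ g f x}, x ≤ sSup {x : ℝ | x ≤ g f x} - (2:ℝ) ^ (-(n₀:ℤ)) := by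
  intro x hx
  by_contra hcon
  push_neg at hcon
  set x₀ := sSup {x : ℝ | x ≤ g f x} with hx₀
  set c : ℝ := (2:ℝ) ^ (-(n₀:ℤ)) with hc
  have hcpos : (0:ℝ) < c := by positivity
  have hxle : x ≤ x₀ := le_csSup (A_bdd f) hx
  -- f n₀ = x₀ < x + c
  have hfn₀ : f n₀ < x + c := by rw [h]; linarith
  -- key: g f x + c ≤ g f (x + c)
  have hkey : g f x + c ≤ g f (x + c) := by
    rw [← le_sub_iff_add_le]
    apply csSup_le ⟨0, gS_nonempty f x⟩
    rintro s ⟨M, hM, rfl⟩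
    rw [le_sub_iff_add_le]
    have hn₀M : n₀ ∉ M := fun hmem => absurd (hM n₀ hmem) (by rw [h]; linarith)
    have : (∑ n ∈ M, (2:ℝ) ^ (-(n:ℤ))) + c ∈
        {s : ℝ | ∃ M : Finset ℕ, (∀ n ∈ M, f n < x + c) ∧ s = ∑ n ∈ M, (2:ℝ) ^ (-(n:ℤ))} := by
      refine ⟨insert n₀ M, ?_, ?_⟩
      · intro n hn
        rcases Finset.mem_insert.mp hn with rfl | hn
        · exact hfn₀
        · exact lt_of_lt_of_le (hM n hn) (by linarith)
      · rw [Finset.sum_insert hn₀M]; ring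
    exact le_csSup ⟨2, gS_bdd f (x + c)⟩ this
  have hmem : x + c ∈ {x : ℝ | x ≤ g f x} := by
    have hx' : x ≤ g f x := hx
    have : x + c ≤ g f x + c := by linarith
    exact le_trans this hkey
  have : x + c ≤ x₀ := le_csSup (A_bdd f) hmem
  linarith
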